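/- arXiv:1710.01358 — 3 statements merged into one kernel-verified Lean document; each statement's English description precedes it below -/
import Mathlib

section
/- A symmetric n×n matrix M is diagonally dominant with nonnegative diagonal entries if and only if M can be written as a nonnegative combination M = Σ_i α_i v_i v_i^T, where each v_i is a nonzero vector in ℝ^n with at most 2 nonzero components, each equal to ±1. -/
noncomputable def ddSgn (x : ℝ) : ℝ := if x < 0 then -1 else 1

lemma ddSgn_mul_self (x : ℝ) : ddSgn x * ddSgn x = 1 := by
  unfold ddSgn; split <;> norm_num

lemma abs_mul_ddSgn (x : ℝ) : |x| * ddSgn x = x := by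
  unfold ddSgn; split
  · rw [abs_of_neg (by assumption)]; ring
  · rw [abs_of_nonneg (by linarith)]; ring

noncomputable def ddA {n : ℕ} (M : Matrix (Fin n) (Fin n) ℝ) :
    (Fin n ⊕ Fin n × Fin n) → ℝ
  | .inl i => M i i - ∑ j ∈ Finset.univ.erase i, |M i j|
  | .inr (i, j) => if i = j then 0 else |M i j| / 2

noncomputable def ddV {n : ℕ} (M : Matrix (Fin n) (Fin n) ℝ) :
    (Fin n ⊕ Fin n × Fin n) → Fin n → ℝ
  | .inl i => fun x => if x = i then 1 else 0
  | .inr (i, j) => fun x => if x = i then 1 else if x = j then ddSgn (M i j) else 0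

theorem dd_iff_nonneg_comb_of_pm_one_vectors (n : ℕ)
    (M : Matrix (Fin n) (Fin n) ℝ) (hsymm : M.IsSymm) :
    ((∀ i, 0 ≤ M i i) ∧ ∀ i, ∑ j ∈ Finset.univ.erase i, |M i j| ≤ M i i) ↔
    (∃ (k : ℕ) (α : Fin k → ℝ) (v : Fin k → Fin n → ℝ),
      (∀ i, 0 ≤ α i) ∧
      (∀ i, v i ≠ 0) ∧
      (∀ i, (Finset.univ.filter fun j => v i j ≠ 0).card ≤ 2) ∧
      (∀ i j, v i j = 0 ∨ v i j = 1 ∨ v i j = -1) ∧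
      M = ∑ i, α i • Matrix.vecMulVec (v i) (v i)) := by
  have hMsymm : ∀ a b, M b a = M a b := fun a b =>
    (congrFun (congrFun hsymm a) b : M.transpose a b = M a b)
  constructor
  · rintro ⟨hdiag, hdd⟩
    set I := (Fin n ⊕ Fin n × Fin n) with hI
    have hA0 : ∀ x : I, 0 ≤ ddA M x := by
      rintro (t | ⟨p, q⟩)
      · exact sub_nonneg.mpr (hdd t)
      · show 0 ≤ if p = q then 0 else |M p q| / 2
        split <;> positivity
    have hVne : ∀ x : I, ddV M x ≠ 0 := by
      rintro (t | ⟨p, q⟩) h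
      · have := congrFun h t
        simp [ddV] at this
      · have := congrFun h p
        simp [ddV] at this
    have hVcard : ∀ x : I, (Finset.univ.filter fun j => ddV M x j ≠ 0).card ≤ 2 := by
      rintro (t | ⟨p, q⟩)
      · calc (Finset.univ.filter fun j => ddV M (.inl t) j ≠ 0).card
            ≤ ({t} : Finset (Fin n)).card := by
              apply Finset.card_le_card
              intro x hx
              rw [Finset.mem_filter] at hx; simp only [ddV] at hx
              rcases hx with ⟨-, hx⟩
              by_contra hxt
              simp only [Finset.mem_singleton] at hxt
              simp [hxt] at hx
          _ ≤ 2 := by simp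
      · calc (Finset.univ.filter fun j => ddV M (.inr (p, q)) j ≠ 0).card
            ≤ ({p, q} : Finset (Fin n)).card := by
              apply Finset.card_le_card
              intro x hx
              rw [Finset.mem_filter] at hx; simp only [ddV] at hx
              rcases hx with ⟨-, hx⟩
              by_contra hxpq
              simp only [Finset.mem_insert, Finset.mem_singleton, not_or] at hxpq
              simp [hxpq.1, hxpq.2] at hx
          _ ≤ 2 := (Finset.card_insert_le _ _).trans (by simp)
    have hVval : ∀ (x : I) j, ddV M x j = 0 ∨ ddV M x j = 1 ∨ ddV M x j = -1 := by
      rintro (t | ⟨p, q⟩) j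
      · simp only [ddV]; split <;> simp
      · simp only [ddV]
        split
        · simp
        · split
          · unfold ddSgn; split <;> simp
          · simp
    have hMain : M = ∑ x : I, ddA M x • Matrix.vecMulVec (ddV M x) (ddV M x) := by
      ext a b
      rw [Matrix.sum_apply]
      simp only [Matrix.smul_apply, Matrix.vecMulVec_apply, smul_eq_mul]
      rw [Fintype.sum_sum_type, Fintype.sum_prod_type]
      set g : Fin n → Fin n → ℝ :=
        fun i j => ddA M (.inr (i, j)) * (ddV M (.inr (i, j)) a * ddV M (.inr (i, j)) b)
        with hg
      have hsimp : ∀ i j, g i j = (if i = j then 0 else |M i j| / 2) *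
          ((if a = i then 1 else if a = j then ddSgn (M i j) else 0) *
           (if b = i then 1 else if b = j then ddSgn (M i j) else 0)) := by
        intro i j; simp only [hg, ddA, ddV]
      rcases eq_or_ne a b with hab | hab
      · subst hab
        have hinl : ∑ t : Fin n,
            ddA M (.inl t) * (ddV M (.inl t) a * ddV M (.inl t) a)
            = M a a - ∑ j ∈ Finset.univ.erase a, |M a j| := by
          rw [Finset.sum_eq_single a]
          · simp [ddA, ddV]
          · intro t _ hta
            simp [ddV, Ne.symm hta]
          · simp
        have hne : ∀ i, i ≠ a → (∑ j, g i j) = |M a i| / 2 := by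
          intro i hia
          rw [Finset.sum_eq_single a]
          · rw [hsimp]
            rw [if_neg hia, if_neg (Ne.symm hia), if_pos rfl]
            rw [ddSgn_mul_self, mul_one, hMsymm a i]
          · intro j _ hja
            rw [hsimp, if_neg (Ne.symm hia), if_neg (Ne.symm hja)]
            ring
          · simp
        have ha : ∑ j, g a j = ∑ j ∈ Finset.univ.erase a, |M a j| / 2 := by
          rw [← Finset.add_sum_erase _ (fun j => g a j) (Finset.mem_univ a)]
          rw [hsimp a a, if_pos rfl, zero_mul, zero_add]
          refine Finset.sum_congr rfl fun j hj => ?_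
          have hja : a ≠ j := Ne.symm (Finset.ne_of_mem_erase hj)
          rw [hsimp, if_neg hja, if_pos rfl]; ring
        have hdouble : ∑ i, ∑ j, g i j = ∑ j ∈ Finset.univ.erase a, |M a j| := by
          rw [← Finset.add_sum_erase _ (fun i => ∑ j, g i j) (Finset.mem_univ a), ha]
          rw [Finset.sum_congr rfl (fun i hi => hne i (Finset.ne_of_mem_erase hi))]
          rw [← Finset.sum_add_distrib]
          exact Finset.sum_congr rfl fun j _ => by ring
        rw [hinl, hdouble]; ring
      · have hinl : ∑ t : Fin n,
            ddA M (.inl t) * (ddV M (.inl t) a * ddV M (.inl t) b) = 0 := by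
          refine Finset.sum_eq_zero fun t _ => ?_
          rcases eq_or_ne a t with hat | hat
          · have hbt : b ≠ t := by rintro rfl; exact hab hat
            simp [ddV, hbt]
          · simp [ddV, hat]
        have hpick : ∀ i, (∑ j, g i j) =
            (if i = a then M a b / 2 else 0) + (if i = b then M a b / 2 else 0) := by
          intro i
          rcases eq_or_ne i a with rfl | hia
          · 
            rw [if_pos rfl, if_neg hab, add_zero]
            rw [Finset.sum_eq_single b]
            · simp only [hsimp]
              simp [hab, Ne.symm hab]
              linear_combination (abs_mul_ddSgn (M i b)) / 2
            · intro j _ hjb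
              simp only [hsimp]
              simp [Ne.symm hab, Ne.symm hjb]
            · simp
          · rcases eq_or_ne i b with rfl | hib
            · 
              rw [if_neg hia, if_pos rfl, zero_add]
              rw [Finset.sum_eq_single a]
              · simp only [hsimp]
                simp [Ne.symm hia, hab, Ne.symm hab]
                linear_combination (abs_mul_ddSgn (M i a)) / 2 + (hMsymm a i) / 2
              · intro j _ hja
                simp only [hsimp]
                simp [Ne.symm hia, Ne.symm hja]
              · simp
            · rw [if_neg hia, if_neg hib, add_zero]
              refine Finset.sum_eq_zero fun j _ => ?_
              simp only [hsimp]
              rcases eq_or_ne a j with haj | haj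
              · have hbj : b ≠ j := by rintro rfl; exact hab haj
                simp [Ne.symm hia, Ne.symm hib, hbj]
              · simp [Ne.symm hia, Ne.symm hib, haj]
        rw [hinl, Finset.sum_congr rfl (fun i _ => hpick i), Finset.sum_add_distrib]
        simp [hab]
    refine ⟨Fintype.card I, fun i => ddA M ((Fintype.equivFin I).symm i),
      fun i => ddV M ((Fintype.equivFin I).symm i),
      fun i => hA0 _, fun i => hVne _, fun i => hVcard _, fun i j => hVval _ j, ?_⟩
    conv_lhs => rw [hMain]
    exact (Equiv.sum_comp (Fintype.equivFin I).symm
      (fun x => ddA M x • Matrix.vecMulVec (ddV M x) (ddV M x))).symm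
  · rintro ⟨k, α, v, hα, hv0, hcard, hval, hM⟩
    have hS : ∀ a b, M a b = ∑ t, α t * (v t a * v t b) := by
      intro a b
      rw [hM, Matrix.sum_apply]
      simp [Matrix.vecMulVec_apply]
    have habs1 : ∀ t j, |v t j| ≤ 1 := by
      intro t j
      rcases hval t j with h | h | h <;> simp [h]
    have hsum2 : ∀ t, ∑ j, |v t j| ≤ 2 := by
      intro t
      have h1 : ∑ j ∈ Finset.univ.filter (fun j => v t j ≠ 0), |v t j| = ∑ j, |v t j| :=
        Finset.sum_filter_of_ne (fun j _ habs h0 => habs (by simp [h0]))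
      rw [← h1]
      calc ∑ j ∈ Finset.univ.filter (fun j => v t j ≠ 0), |v t j|
          ≤ (Finset.univ.filter (fun j => v t j ≠ 0)).card • (1 : ℝ) :=
            Finset.sum_le_card_nsmul _ _ 1 (fun j _ => habs1 t j)
        _ = (Finset.univ.filter (fun j => v t j ≠ 0)).card := by simp
        _ ≤ 2 := by exact_mod_cast hcard t
    constructor
    · intro i
      rw [hS i i]
      exact Finset.sum_nonneg fun t _ => mul_nonneg (hα t) (mul_self_nonneg _)
    · intro i
      calc ∑ j ∈ Finset.univ.erase i, |M i j|
          ≤ ∑ j ∈ Finset.univ.erase i, ∑ t, α t * (|v t i| * |v t j|) := by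
            apply Finset.sum_le_sum
            intro j _
            rw [hS i j]
            refine (Finset.abs_sum_le_sum_abs _ _).trans ?_
            apply Finset.sum_le_sum
            intro t _
            rw [abs_mul, abs_mul, abs_of_nonneg (hα t)]
        _ = ∑ t, (α t * |v t i|) * ∑ j ∈ Finset.univ.erase i, |v t j| := by
            rw [Finset.sum_comm]
            exact Finset.sum_congr rfl fun t _ => by rw [Finset.mul_sum]; ring_nf
        _ ≤ ∑ t, α t * (v t i * v t i) := by
            apply Finset.sum_le_sum
            intro t _
            have herase : ∑ j ∈ Finset.univ.erase i, |v t j| = (∑ j, |v t j|) - |v t i| :=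
              Finset.sum_erase_eq_sub (Finset.mem_univ i)
            rcases hval t i with h | h | h
            · simp [h]
            · rw [herase, h]
              simp only [abs_one]
              have h2 : α t * ((∑ j, |v t j|) - 1) ≤ α t * 1 :=
                mul_le_mul_of_nonneg_left (by linarith [hsum2 t]) (hα t)
              nlinarith [h2]
            · rw [herase, h]
              simp only [abs_neg, abs_one]
              have h2 : α t * ((∑ j, |v t j|) - 1) ≤ α t * 1 :=
                mul_le_mul_of_nonneg_left (by linarith [hsum2 t]) (hα t)
              nlinarith [h2]
        _ = M i i := (hS i i).symm
end

section
/- If a convex cone C ⊆ ℝ^n has a proper (S₊²)^p-lift, i.e., C = π[(S₊²)^p ∩ L] for a subspace L and linear map π, then for any v₁,...,v_b ∈ C and ℓ₁,...,ℓ_a ∈ C* (the dual cone), the nonnegative matrix S with S_{ij} = ⟨ℓ_i, v_j⟩ has S₊²-rank at most p. -/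
open Matrix

private lemma psd_smul' {m : Type*} [Fintype m] {c : ℝ} {A : Matrix m m ℝ}
    (hc : 0 ≤ c) (hA : A.PosSemidef) : (c • A).PosSemidef := by
  refine posSemidef_iff_dotProduct_mulVec.mpr ⟨?_, ?_⟩
  · show (c • A)ᴴ = c • A
    rw [conjTranspose_smul, hA.1.eq]
    simp
  · intro x
    rw [smul_mulVec, dotProduct_smul, smul_eq_mul]
    exact mul_nonneg hc (hA.dotProduct_mulVec_nonneg x)

private lemma psd_vecMulVec' (x : Fin 2 → ℝ) : (vecMulVec x x).PosSemidef := by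
  refine posSemidef_iff_dotProduct_mulVec.mpr ⟨?_, ?_⟩
  · show (vecMulVec x x)ᴴ = vecMulVec x x
    ext i j
    simp [vecMulVec_apply, conjTranspose_apply, mul_comm]
  · intro y
    have h : dotProduct (star y) (vecMulVec x x *ᵥ y) = (dotProduct x y) ^ 2 := by
      simp [vecMulVec, mulVec, dotProduct, Fin.sum_univ_two, Matrix.of_apply]
      ring
    rw [h]
    positivity

private lemma std_transpose' (i j : Fin 2) :
    (Matrix.single i j (1:ℝ))ᵀ = Matrix.single j i 1 := by
  ext a b
  simp [Matrix.single, Matrix.transpose_apply, and_comm]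

private lemma pd_shift' {P Y : Matrix (Fin 2) (Fin 2) ℝ} (hP : P.PosDef) (hY : Y.IsHermitian) :
    ∃ t : ℝ, 0 ≤ t ∧ (t • P + Y).PosSemidef := by
  have hcontP : Continuous fun x : Fin 2 → ℝ => dotProduct x (P *ᵥ x) := by
    simp only [dotProduct, mulVec, Fin.sum_univ_two]
    continuity
  have hcontY : Continuous fun x : Fin 2 → ℝ => |dotProduct x (Y *ᵥ x)| := by
    apply Continuous.abs
    simp only [dotProduct, mulVec, Fin.sum_univ_two]
    continuity
  have hne : (Metric.sphere (0 : Fin 2 → ℝ) 1).Nonempty :=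
    NormedSpace.sphere_nonempty.mpr zero_le_one
  obtain ⟨u, huS, hu⟩ :=
    (isCompact_sphere (0 : Fin 2 → ℝ) 1).exists_isMinOn hne hcontP.continuousOn
  obtain ⟨w, hwS, hw⟩ :=
    (isCompact_sphere (0 : Fin 2 → ℝ) 1).exists_isMaxOn hne hcontY.continuousOn
  set c := dotProduct u (P *ᵥ u) with hc_def
  set Cb := |dotProduct w (Y *ᵥ w)| with hC_def
  have hu0 : u ≠ 0 := by
    intro h
    rw [mem_sphere_zero_iff_norm, h, norm_zero] at huS
    exact one_ne_zero huS.symm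
  have hc : 0 < c := by
    have h := hP.dotProduct_mulVec_pos hu0
    simpa only [star_trivial] using h
  have hC0 : 0 ≤ Cb := abs_nonneg _
  have ht0 : 0 ≤ Cb / c := div_nonneg hC0 hc.le
  refine ⟨Cb / c, ht0, posSemidef_iff_dotProduct_mulVec.mpr ⟨?_, ?_⟩⟩
  · show ((Cb / c) • P + Y)ᴴ = (Cb / c) • P + Y
    rw [conjTranspose_add, conjTranspose_smul, hP.1.eq, hY.eq]
    simp
  · intro x
    rcases eq_or_ne x 0 with rfl | hx
    · simp
    · have hr : (0:ℝ) < ‖x‖ := norm_pos_iff.mpr hx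
      set r := ‖x‖ with hr_def
      set z := r⁻¹ • x with hz_def
      have hzS : z ∈ Metric.sphere (0 : Fin 2 → ℝ) 1 := by
        rw [mem_sphere_zero_iff_norm, hz_def, norm_smul, norm_inv, norm_norm]
        field_simp
      have hxz : x = r • z := by rw [hz_def, smul_inv_smul₀ hr.ne']
      have hq : ∀ (M : Matrix (Fin 2) (Fin 2) ℝ) (y : Fin 2 → ℝ),
          dotProduct (r • y) (M *ᵥ (r • y)) = r ^ 2 * dotProduct y (M *ᵥ y) := by
        intro M y
        rw [mulVec_smul, dotProduct_smul, smul_dotProduct, smul_eq_mul, smul_eq_mul]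
        ring
      have h1 : c ≤ dotProduct z (P *ᵥ z) := isMinOn_iff.mp hu z hzS
      have h2 : |dotProduct z (Y *ᵥ z)| ≤ Cb := isMaxOn_iff.mp hw z hzS
      have h2' : -Cb ≤ dotProduct z (Y *ᵥ z) := (abs_le.mp h2).1
      have hkey : Cb / c * c = Cb := div_mul_cancel₀ _ hc.ne'
      have star_x : star x = x := by simp
      rw [star_x, add_mulVec, dotProduct_add, smul_mulVec, dotProduct_smul, smul_eq_mul,
        hxz, hq, hq]
      nlinarith [sq_nonneg r, mul_le_mul_of_nonneg_left h1 ht0]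

theorem lift_gives_rank_bound (n p a b : ℕ) (C : Set (Fin n → ℝ))
    (hCone : ∀ (c : ℝ) (x : Fin n → ℝ), 0 ≤ c → x ∈ C → c • x ∈ C)
    (hConvex : ∀ x y, x ∈ C → y ∈ C → x + y ∈ C)
    (L : Submodule ℝ (Fin p → Matrix (Fin 2) (Fin 2) ℝ))
    (π : (Fin p → Matrix (Fin 2) (Fin 2) ℝ) →ₗ[ℝ] (Fin n → ℝ))
    (hlift : C = π '' {M | (∀ k, (M k).PosSemidef) ∧ M ∈ L})
    (hproper : ∃ M ∈ L, ∀ k, (M k).PosDef)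
    (v : Fin b → Fin n → ℝ) (hv : ∀ j, v j ∈ C)
    (ℓ : Fin a → Fin n → ℝ)
    (hℓ : ∀ i, ∀ w ∈ C, 0 ≤ dotProduct (ℓ i) w) :
    ∃ (A : Fin a → Fin p → Matrix (Fin 2) (Fin 2) ℝ)
      (B : Fin b → Fin p → Matrix (Fin 2) (Fin 2) ℝ),
      (∀ i k, (A i k).PosSemidef) ∧ (∀ j k, (B j k).PosSemidef) ∧
      ∀ i j, dotProduct (ℓ i) (v j) = ∑ k, Matrix.trace (A i k * B j k) := by
  classical
  obtain ⟨M0, hM0L, hM0pd⟩ := hproper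
  -- the submodule of tuples of Hermitian matrices
  let V : Submodule ℝ (Fin p → Matrix (Fin 2) (Fin 2) ℝ) :=
    { carrier := {M | ∀ k, (M k).IsHermitian}
      add_mem' := fun hA hB k => (hA k).add (hB k)
      zero_mem' := fun k => isHermitian_zero
      smul_mem' := fun c M hM k => by
        show ((c • M) k)ᴴ = (c • M) k
        simp only [Pi.smul_apply, conjTranspose_smul, (hM k).eq]
        simp }
  -- the cone of PSD tuples inside V
  let s : PointedCone ℝ ↥V :=
    { carrier := {M : ↥V | ∀ k, ((M : Fin p → Matrix (Fin 2) (Fin 2) ℝ) k).PosSemidef}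
      smul_mem' := fun c M hM k => by
        have h := psd_smul' c.2 (hM k)
        exact h
      zero_mem' := fun k => by
        simpa using (Matrix.PosSemidef.zero : (0 : Matrix (Fin 2) (Fin 2) ℝ).PosSemidef)
      add_mem' := fun {M N} hM hN k => by
        have h := (hM k).add (hN k)
        simpa using h }
  -- the symmetrization map
  let symm : (Fin p → Matrix (Fin 2) (Fin 2) ℝ) →ₗ[ℝ] ↥V :=
    { toFun := fun M => ⟨fun k => (2:ℝ)⁻¹ • (M k + (M k)ᵀ), fun k => by
        show ((2:ℝ)⁻¹ • (M k + (M k)ᵀ))ᴴ = (2:ℝ)⁻¹ • (M k + (M k)ᵀ)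
        rw [conjTranspose_smul, conjTranspose_add, conjTranspose_eq_transpose_of_trivial,
          conjTranspose_eq_transpose_of_trivial, transpose_transpose]
        simp [add_comm]⟩
      map_add' := fun M N => by
        apply Subtype.ext
        funext k
        show (2:ℝ)⁻¹ • ((M + N) k + ((M + N) k)ᵀ)
            = (2:ℝ)⁻¹ • (M k + (M k)ᵀ) + (2:ℝ)⁻¹ • (N k + (N k)ᵀ)
        simp only [Pi.add_apply, transpose_add]
        rw [← smul_add]
        congr 1
        abel
      map_smul' := fun c M => by
        apply Subtype.ext
        funext k
        show (2:ℝ)⁻¹ • ((c • M) k + ((c • M) k)ᵀ)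
            = c • ((2:ℝ)⁻¹ • (M k + (M k)ᵀ))
        simp only [Pi.smul_apply, transpose_smul]
        rw [← smul_add, smul_comm] }
  have symm_fix : ∀ (M : Fin p → Matrix (Fin 2) (Fin 2) ℝ) (hM : ∀ k, (M k).IsHermitian),
      symm M = ⟨M, hM⟩ := by
    intro M hM
    apply Subtype.ext
    funext k
    show (2:ℝ)⁻¹ • (M k + (M k)ᵀ) = M k
    rw [← conjTranspose_eq_transpose_of_trivial, (hM k).eq, ← two_smul ℝ, smul_smul]
    norm_num
  have hM0V : ∀ k, (M0 k).IsHermitian := fun k => (hM0pd k).1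
  have key : ∀ i, ∃ A : Fin p → Matrix (Fin 2) (Fin 2) ℝ,
      (∀ k, (A k).PosSemidef) ∧
      ∀ M : Fin p → Matrix (Fin 2) (Fin 2) ℝ, M ∈ L → (∀ k, (M k).IsHermitian) →
        dotProduct (ℓ i) (π M) = ∑ k, Matrix.trace (A k * M k) := by
    intro i
    let dp : (Fin n → ℝ) →ₗ[ℝ] ℝ :=
      { toFun := fun w => dotProduct (ℓ i) w
        map_add' := fun x y => dotProduct_add _ _ _
        map_smul' := fun c x => by simp [dotProduct_smul] }
    let D : Submodule ℝ ↥V := L.comap V.subtype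
    let f : ↥V →ₗ.[ℝ] ℝ := ⟨D, dp ∘ₗ π ∘ₗ V.subtype ∘ₗ D.subtype⟩
    have hnonneg : ∀ x : f.domain, (x : ↥V) ∈ s → 0 ≤ f x := by
      intro x hx
      have hmem : π ((x : ↥V) : Fin p → Matrix (Fin 2) (Fin 2) ℝ) ∈ C := by
        rw [hlift]
        exact ⟨_, ⟨hx, x.2⟩, rfl⟩
      exact hℓ i _ hmem
    have hdense : ∀ y : ↥V, ∃ x : f.domain, (x : ↥V) + y ∈ s := by
      intro y
      choose t ht0 htp using fun k =>
        pd_shift' (hM0pd k) (y.2 k)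
      set T := ∑ k, t k with hT
      have hTk : ∀ k, t k ≤ T :=
        fun k => Finset.single_le_sum (fun j _ => ht0 j) (Finset.mem_univ k)
      have hTM0V : ∀ k, ((T • M0) k).IsHermitian := fun k => V.smul_mem T hM0V k
      refine ⟨⟨⟨T • M0, hTM0V⟩, ?_⟩, ?_⟩
      · show (T • M0 : Fin p → Matrix (Fin 2) (Fin 2) ℝ) ∈ L
        exact L.smul_mem T hM0L
      · intro k
        show ((T • M0) k + (y : Fin p → Matrix (Fin 2) (Fin 2) ℝ) k).PosSemidef
        have hdecomp : (T • M0) k + (y : Fin p → Matrix (Fin 2) (Fin 2) ℝ) k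
            = (T - t k) • M0 k + (t k • M0 k + (y : Fin p → Matrix (Fin 2) (Fin 2) ℝ) k) := by
          simp only [Pi.smul_apply, sub_smul]
          abel
        rw [hdecomp]
        exact (psd_smul' (by linarith [hTk k]) (hM0pd k).posSemidef).add (htp k)
    obtain ⟨g, hg_eq, hg_nn⟩ := riesz_extension s f hnonneg hdense
    let G : (Fin p → Matrix (Fin 2) (Fin 2) ℝ) →ₗ[ℝ] ℝ := g ∘ₗ symm
    let A : Fin p → Matrix (Fin 2) (Fin 2) ℝ :=
      fun k => Matrix.of fun l m' => G (Pi.single k (Matrix.single m' l 1))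
    have hGsym : ∀ (M : Fin p → Matrix (Fin 2) (Fin 2) ℝ) (hM : ∀ k, (M k).IsHermitian),
        G M = g ⟨M, hM⟩ := by
      intro M hM
      show g (symm M) = g ⟨M, hM⟩
      rw [symm_fix M hM]
    have hsingle : ∀ (k : Fin p) (X : Matrix (Fin 2) (Fin 2) ℝ),
        G (Pi.single k X)
          = ∑ m', ∑ l, X m' l * G (Pi.single k (Matrix.single m' l 1)) := by
      intro k X
      let Gk : Matrix (Fin 2) (Fin 2) ℝ →ₗ[ℝ] ℝ :=
        G ∘ₗ LinearMap.single ℝ (fun _ => Matrix (Fin 2) (Fin 2) ℝ) k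
      have hGk : ∀ X : Matrix (Fin 2) (Fin 2) ℝ, G (Pi.single k X) = Gk X := fun _ => rfl
      rw [hGk]
      conv_lhs => rw [matrix_eq_sum_single X]
      rw [map_sum]
      refine Finset.sum_congr rfl fun m' _ => ?_
      rw [map_sum]
      refine Finset.sum_congr rfl fun l _ => ?_
      rw [show Matrix.single m' l (X m' l) = (X m' l) • Matrix.single m' l 1 by
        rw [smul_single, smul_eq_mul, mul_one]]
      rw [_root_.map_smul, smul_eq_mul, hGk]
    have hGtrans : ∀ (k : Fin p) (X : Matrix (Fin 2) (Fin 2) ℝ),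
        G (Pi.single k Xᵀ) = G (Pi.single k X) := by
      intro k X
      show g (symm _) = g (symm _)
      congr 1
      apply Subtype.ext
      funext k'
      show (2:ℝ)⁻¹ • ((Pi.single k Xᵀ : Fin p → Matrix (Fin 2) (Fin 2) ℝ) k'
            + ((Pi.single k Xᵀ : Fin p → Matrix (Fin 2) (Fin 2) ℝ) k')ᵀ)
          = (2:ℝ)⁻¹ • ((Pi.single k X : Fin p → Matrix (Fin 2) (Fin 2) ℝ) k'
            + ((Pi.single k X : Fin p → Matrix (Fin 2) (Fin 2) ℝ) k')ᵀ)
      rcases eq_or_ne k' k with rfl | hk'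
      · simp [Pi.single_eq_same, transpose_transpose, add_comm]
      · simp [Pi.single_eq_of_ne hk']
    have hGtr : ∀ M : Fin p → Matrix (Fin 2) (Fin 2) ℝ,
        G M = ∑ k, Matrix.trace (A k * M k) := by
      intro M
      conv_lhs => rw [show M = ∑ k, Pi.single k (M k) from (Finset.univ_sum_single M).symm]
      rw [map_sum]
      refine Finset.sum_congr rfl fun k _ => ?_
      rw [hsingle]
      rw [Matrix.trace]
      simp only [Matrix.diag, Matrix.mul_apply, Matrix.of_apply, A]
      rw [Finset.sum_comm]
      exact Finset.sum_congr rfl fun m' _ => Finset.sum_congr rfl fun l _ => mul_comm _ _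
    have hApsd : ∀ k, (A k).PosSemidef := by
      intro k
      refine posSemidef_iff_dotProduct_mulVec.mpr ⟨?_, ?_⟩
      · show (A k)ᴴ = A k
        ext l m'
        simp only [conjTranspose_apply, Matrix.of_apply, A, star_trivial]
        rw [← std_transpose' m' l, hGtrans]
      · intro x
        have hquad : dotProduct (star x) ((A k) *ᵥ x)
            = G (Pi.single k (vecMulVec x x)) := by
          rw [hsingle]
          simp only [dotProduct, mulVec, Matrix.of_apply, Fin.sum_univ_two, A, star_trivial,
            vecMulVec_apply]
          ring
        rw [hquad]
        have hNherm : ∀ k', ((Pi.single k (vecMulVec x x) :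
            Fin p → Matrix (Fin 2) (Fin 2) ℝ) k').IsHermitian := by
          intro k'
          rcases eq_or_ne k' k with rfl | hk'
          · rw [Pi.single_eq_same]; exact (psd_vecMulVec' x).1
          · rw [Pi.single_eq_of_ne hk']; exact isHermitian_zero
        rw [hGsym _ hNherm]
        apply hg_nn
        intro k'
        show ((Pi.single k (vecMulVec x x) : Fin p → Matrix (Fin 2) (Fin 2) ℝ) k').PosSemidef
        rcases eq_or_ne k' k with rfl | hk'
        · rw [Pi.single_eq_same]; exact psd_vecMulVec' x
        · rw [Pi.single_eq_of_ne hk']; exact Matrix.PosSemidef.zero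
    refine ⟨A, hApsd, ?_⟩
    intro M hML hMherm
    have hMD : (⟨M, hMherm⟩ : ↥V) ∈ D := hML
    have e1 : G M = g ⟨M, hMherm⟩ := hGsym M hMherm
    have e2 : g ⟨M, hMherm⟩ = dotProduct (ℓ i) (π M) := by
      have h := hg_eq ⟨⟨M, hMherm⟩, hMD⟩
      exact h
    rw [← hGtr, e1, e2]
  choose A hA_psd hA_eq using key
  have hB : ∀ j, ∃ B : Fin p → Matrix (Fin 2) (Fin 2) ℝ,
      (∀ k, (B k).PosSemidef) ∧ B ∈ L ∧ π B = v j := by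
    intro j
    have h := hv j
    rw [hlift] at h
    obtain ⟨M, ⟨h1, h2⟩, h3⟩ := h
    exact ⟨M, h1, h2, h3⟩
  choose B hB_psd hB_L hB_π using hB
  refine ⟨A, B, hA_psd, hB_psd, ?_⟩
  intro i j
  rw [← hB_π j]
  exact hA_eq i (B j) (hB_L j) (fun k => (hB_psd j k).1)
end

section
/- The dual cone of the cone of nonnegative univariate quartic polynomials (identified with ℝ⁵ via coefficients) is the closed conic hull of the moment curve {(1, t, t², t³, t⁴) : t ∈ ℝ}. -/
open Set RealInnerProductSpace

/-- The set of finite nonnegative combinations of moment-curve vectors, viewed in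
Euclidean space. -/
def momentSet : Set (EuclideanSpace ℝ (Fin 5)) :=
  {x | ∃ (m : ℕ) (c : Fin m → ℝ) (t : Fin m → ℝ),
      (∀ i, 0 ≤ c i) ∧ x = ∑ i, c i • (fun k : Fin 5 => t i ^ (k : ℕ))}

/-- The moment-curve vector `(1, t, t², t³, t⁴)`. -/
noncomputable def momVec (t : ℝ) : EuclideanSpace ℝ (Fin 5) :=
  WithLp.toLp 2 (fun k : Fin 5 => t ^ (k : ℕ))

/-- `momentSet` as a convex cone. -/
noncomputable def momentCone : ConvexCone ℝ (EuclideanSpace ℝ (Fin 5)) where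
  carrier := momentSet
  smul_mem' := by
    rintro r hr x ⟨m, c, t, hc, hx⟩
    refine ⟨m, fun i => r * c i, t, fun i => mul_nonneg hr.le (hc i), ?_⟩
    rw [WithLp.ofLp_smul, hx, Finset.smul_sum]
    exact Finset.sum_congr rfl fun i _ => smul_smul r (c i) _
  add_mem' := by
    rintro x ⟨m, c, t, hc, hx⟩ y ⟨n, d, s, hd, hy⟩
    refine ⟨m + n, Fin.append c d, Fin.append t s, ?_, ?_⟩
    · intro i
      refine Fin.addCases (fun j => ?_) (fun j => ?_) i
      · simpa [Fin.append_left] using hc j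
      · simpa [Fin.append_right] using hd j
    · rw [WithLp.ofLp_add, hx, hy, Fin.sum_univ_add]
      simp [Fin.append_left, Fin.append_right]

lemma zero_mem_momentSet : (0 : EuclideanSpace ℝ (Fin 5)) ∈ momentSet :=
  ⟨0, Fin.elim0, Fin.elim0, fun i => i.elim0, by simp⟩

lemma inner_moment (a : EuclideanSpace ℝ (Fin 5)) (t : ℝ) :
    ⟪momVec t, a⟫ = ∑ k : Fin 5, a k * t ^ (k : ℕ) := by
  rw [PiLp.inner_apply]
  exact Finset.sum_congr rfl fun k _ => by simp [momVec, RCLike.inner_apply, mul_comm]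

/-- The PSD quartic cone is the inner dual cone of the closed conic hull of the
moment curve. -/
lemma psd_eq_dual :
    {a : EuclideanSpace ℝ (Fin 5) | ∀ t : ℝ, 0 ≤ ∑ k : Fin 5, a k * t ^ (k : ℕ)} =
      (ProperCone.innerDual (closure momentSet) : Set (EuclideanSpace ℝ (Fin 5))) := by
  ext a
  simp only [Set.mem_setOf_eq, SetLike.mem_coe, ProperCone.mem_innerDual]
  constructor
  · intro ha
    have hsub : closure momentSet ⊆ {x : EuclideanSpace ℝ (Fin 5) | 0 ≤ ⟪x, a⟫} := by
      refine closure_minimal ?_ ?_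
      · rintro x ⟨m, c, t, hc, hx⟩
        obtain rfl : x = _ := congrArg (WithLp.toLp 2) hx
        simp only [Set.mem_setOf_eq, WithLp.toLp_sum, WithLp.toLp_smul, sum_inner,
          real_inner_smul_left]
        refine Finset.sum_nonneg fun i _ => mul_nonneg (hc i) ?_
        have : (WithLp.toLp 2 (fun k : Fin 5 => t i ^ (k : ℕ)) : EuclideanSpace ℝ (Fin 5)) = momVec (t i) := rfl
        rw [this, inner_moment]
        exact ha (t i)
      · exact isClosed_le continuous_const (continuous_id.inner continuous_const)
    exact fun x hx => hsub hx
  · intro h t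
    rw [← inner_moment]
    exact h (subset_closure ⟨1, fun _ => 1, fun _ => t, fun _ => zero_le_one, by
      simp only [Fin.sum_univ_one, one_smul]; rfl⟩)

theorem dual_of_nonneg_quartics_eq_closed_conic_hull_moment_curve :
    {ℓ : Fin 5 → ℝ | ∀ a : Fin 5 → ℝ,
        (∀ t : ℝ, 0 ≤ ∑ k : Fin 5, a k * t ^ (k : ℕ)) → 0 ≤ ∑ k : Fin 5, ℓ k * a k} =
    closure {x : Fin 5 → ℝ | ∃ (m : ℕ) (c : Fin m → ℝ) (t : Fin m → ℝ),
        (∀ i, 0 ≤ c i) ∧ x = ∑ i, c i • (fun k : Fin 5 => t i ^ (k : ℕ))} := by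
  have hdd := ProperCone.innerDual_innerDual
    (Submodule.closure (momentCone.toPointedCone zero_mem_momentSet))
  have hdd' : ((ProperCone.innerDual (ProperCone.innerDual (closure momentSet) :
        Set (EuclideanSpace ℝ (Fin 5))) :
        Set (EuclideanSpace ℝ (Fin 5)))) = closure momentSet := by
    exact SetLike.ext'_iff.mp hdd
  have hpre : closure momentSet = (PiLp.homeomorph 2 (fun _ : Fin 5 => ℝ)) ⁻¹'
      closure {x : Fin 5 → ℝ | ∃ (m : ℕ) (c : Fin m → ℝ) (t : Fin m → ℝ),
        (∀ i, 0 ≤ c i) ∧ x = ∑ i, c i • (fun k : Fin 5 => t i ^ (k : ℕ))} :=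
    by rw [Homeomorph.preimage_closure]; rfl
  suffices H : {ℓ : EuclideanSpace ℝ (Fin 5) | ∀ a : EuclideanSpace ℝ (Fin 5),
      (∀ t : ℝ, 0 ≤ ∑ k : Fin 5, a k * t ^ (k : ℕ)) → 0 ≤ ∑ k : Fin 5, ℓ k * a k} =
      closure momentSet by
    ext ℓ
    have := Set.ext_iff.mp (H.trans hpre) (WithLp.toLp 2 ℓ)
    refine Iff.trans ?_ (this.trans Iff.rfl)
    constructor
    · intro h a ha; exact h a.ofLp ha
    · intro h a ha; exact h (WithLp.toLp 2 a) ha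
  rw [← hdd']
  ext ℓ
  simp only [Set.mem_setOf_eq, SetLike.mem_coe, ProperCone.mem_innerDual]
  have hinner : ∀ a : EuclideanSpace ℝ (Fin 5), ⟪a, ℓ⟫ = ∑ k : Fin 5, ℓ k * a k := by
    intro a
    rw [PiLp.inner_apply]
    exact Finset.sum_congr rfl fun k _ => by simp [RCLike.inner_apply, mul_comm]
  constructor
  · intro h a haD
    rw [hinner a]
    exact h a ((Set.ext_iff.mp psd_eq_dual a).mpr haD)
  · intro h a ha
    have := h (x := a) ((Set.ext_iff.mp psd_eq_dual a).mp ha)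
    rwa [hinner a] at this
end
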